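/- (Tableau criterion) For w, v ∈ S_n, let w_{i,k} denote the i-th smallest element among w(1),...,w(k), and similarly v_{i,k}. Then w ≤ v in Bruhat order if and only if w_{i,k} ≤ v_{i,k} for all k in the descent set D_R(w) = {i : w(i) > w(i+1)} and all 1 ≤ i ≤ k. -/

import Mathlib

/-!
Write `N_w(m, b)` for the number of entries `< b` among the first `m` entries of `w`. For sorted
lists of equal length, entrywise comparison is equivalent to comparing, for every `b`, how many
entries are `≤ b`; so the tableau condition at `k` says `N_v(k, ·) ≤ N_w(k, ·)`.

Bruhat order is this dominance at every `k`. A covering step `w → w (i j)` with `i < j` raises the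
length exactly when `w i < w j`, and then it lowers `N` by one on the rectangle
`i < m ≤ j`, `w i < b ≤ w j` and leaves it unchanged elsewhere. Conversely, if `N_v ≤ N_w` and
`w ≠ v`, let `K` be the first position where they differ (then `w K < v K`) and `J > K` the first
position with `w K < w J ≤ v K`; no entry strictly between them has a value in `(w K, v K]`, which
makes `N_v < N_w` on the rectangle, so `N_v ≤ N_{w (K J)}` and induction on the length applies.

Dominance at the descents suffices: at an ascent `k`, a violation at `k` passes to `k - 1` if
`w(k) < b`, and otherwise to `k + 1`, because then `w(k + 1) > w(k) ≥ b`; it never reaches `0`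
or `n`, where `N_v = N_w`.
-/

open Equiv Finset Fin.NatCast

/-- The simple transposition `s_i = (i, i+1)` (1-indexed letters), as a
permutation of `Fin n` (0-indexed letters `i-1`, `i`). -/
def sT (n : ℕ) [NeZero n] (i : ℕ) : Equiv.Perm (Fin n) :=
  Equiv.swap ((i - 1 : ℕ) : Fin n) ((i : ℕ) : Fin n)

/-- The Bruhat length of a permutation: its number of inversions. -/
def lenP (n : ℕ) (w : Equiv.Perm (Fin n)) : ℕ :=
  (Finset.univ.filter (fun p : Fin n × Fin n => p.1 < p.2 ∧ w p.2 < w p.1)).card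

/-- Bruhat order on `S_n`: the reflexive-transitive closure of
"multiply on the right by a transposition and increase length". -/
def bruhatLE (n : ℕ) (u w : Equiv.Perm (Fin n)) : Prop :=
  Relation.ReflTransGen
    (fun a b => (∃ i j : Fin n, i ≠ j ∧ b = a * Equiv.swap i j) ∧ lenP n a < lenP n b) u w

/-- `u_ℓ(x) = s_{ℓ-1} s_{ℓ-2} ⋯ s_{ℓ-x_ℓ}` (identity if `x_ℓ = 0`). -/
def uPerm (n : ℕ) [NeZero n] (ℓ m : ℕ) : Equiv.Perm (Fin n) :=
  ((List.range m).map (fun t => sT n (ℓ - 1 - t))).prod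

/-- `ω(x) = u_2(x) u_3(x) ⋯ u_n(x)`. -/
def omegaPerm (n : ℕ) [NeZero n] (x : ℕ → ℕ) : Equiv.Perm (Fin n) :=
  ((List.range (n - 1)).map (fun k => uPerm n (k + 2) (x (k + 2)))).prod

/-- The increasing rearrangement of the first `k` entries `w(1), …, w(k)` of the
one-line notation of `w` (letters `1, …, n`). -/
def sortedPrefix (n : ℕ) (w : Equiv.Perm (Fin n)) (k : ℕ) : List ℕ :=
  ((Finset.univ.filter fun j : Fin n => (j : ℕ) < k).image fun j => (w j : ℕ) + 1).sort (· ≤ ·)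

namespace List

variable {α : Type*} [LinearOrder α]

theorem Pairwise.getElem_le_iff_lt_countP {l : List α} (hl : l.Pairwise (· ≤ ·)) (b : α)
    {i : ℕ} (hi : i < l.length) : l[i] ≤ b ↔ i < l.countP (· ≤ b) := by
  induction l generalizing i with
  | nil => simp at hi
  | cons x xs ih =>
    rw [pairwise_cons] at hl
    by_cases hx : x ≤ b
    · cases i with
      | zero => simp [hx]
      | succ i => simpa [hx] using ih hl.2 (by simpa using hi)
    · have hxs : xs.countP (· ≤ b) = 0 :=
        countP_eq_zero.2 fun y hy => by simpa using (lt_of_not_ge hx).trans_le (hl.1 y hy)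
      cases i with
      | zero => simp [hx, hxs]
      | succ i => simpa [hx, hxs] using ih hl.2 (by simpa using hi)

theorem Pairwise.forall_getD_le_iff {l l' : List α} (hl : l.Pairwise (· ≤ ·))
    (hl' : l'.Pairwise (· ≤ ·)) (hlen : l.length = l'.length) (d : α) :
    (∀ i < l.length, l.getD i d ≤ l'.getD i d) ↔
      ∀ b, l'.countP (· ≤ b) ≤ l.countP (· ≤ b) := by
  constructor
  · intro h b
    by_contra! hlt
    have hc : l.countP (· ≤ b) < l.length := hlt.trans_le (hlen ▸ countP_le_length)
    have hle := h _ hc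
    rw [getD_eq_getElem _ _ hc, getD_eq_getElem _ _ (hlen ▸ hc)] at hle
    have := (hl'.getElem_le_iff_lt_countP b (hlen ▸ hc)).2 hlt
    exact (hl.getElem_le_iff_lt_countP b hc).1 (hle.trans this) |>.false
  · intro h i hi
    rw [getD_eq_getElem _ _ hi, getD_eq_getElem _ _ (hlen ▸ hi)]
    have := (hl'.getElem_le_iff_lt_countP l'[i] (hlen ▸ hi)).1 le_rfl
    exact (hl.getElem_le_iff_lt_countP _ hi).2 (this.trans_le (h _))

end List

section

variable {n : ℕ}

-- Letters are `0, …, n - 1` here, while `sortedPrefix` lists the letters `w p + 1`.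
def prefixCount (w : Perm (Fin n)) (m b : ℕ) : ℕ :=
  #{p : Fin n | (p : ℕ) < m ∧ (w p : ℕ) < b}

section prefixCount

variable (w v : Perm (Fin n))

@[simp]
theorem prefixCount_zero (b : ℕ) : prefixCount w 0 b = 0 := by
  simp [prefixCount]

theorem prefixCount_of_le {m : ℕ} (hm : n ≤ m) (b : ℕ) : prefixCount w m b = min n b := by
  rw [prefixCount, ← Fin.card_filter_val_lt]
  exact card_equiv w fun p => by simp [p.isLt.trans_le hm]

theorem prefixCount_succ {m : ℕ} (hm : m < n) (b : ℕ) :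
    prefixCount w (m + 1) b = prefixCount w m b + if (w ⟨m, hm⟩ : ℕ) < b then 1 else 0 := by
  obtain ⟨p, rfl⟩ : ∃ p : Fin n, (p : ℕ) = m := ⟨⟨m, hm⟩, rfl⟩
  simp only [prefixCount, Nat.lt_succ_iff_lt_or_eq, or_and_right, filter_or, Fin.val_inj, Fin.eta]
  rw [card_union_of_disjoint (disjoint_filter.2 fun q _ h h' => h.1.ne (Fin.val_eq_of_eq h'.1))]
  congr 1
  split_ifs with h
  · exact card_eq_one.2 ⟨p, by ext q; constructor <;> simp +contextual [h]⟩
  · exact card_eq_zero.2 (filter_eq_empty_iff.2 fun q _ hq => h (hq.1 ▸ hq.2))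

theorem prefixCount_add_card_filter {k m : ℕ} (hkm : k ≤ m) (b : ℕ) :
    prefixCount w k b + #{p : Fin n | k ≤ (p : ℕ) ∧ (p : ℕ) < m ∧ (w p : ℕ) < b} =
      prefixCount w m b := by
  rw [prefixCount, prefixCount, ← card_union_of_disjoint
    (disjoint_filter.2 fun p _ h h' => (h'.1.trans_lt h.1).false)]
  congr 1
  ext p
  simp only [mem_union, mem_filter, mem_univ, true_and]
  omega

theorem prefixCount_congr {k : ℕ} (h : ∀ p : Fin n, (p : ℕ) < k → w p = v p) (b : ℕ) :
    prefixCount w k b = prefixCount v k b := by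
  simp only [prefixCount]
  congr 1
  exact filter_congr fun p _ => and_congr_right fun hp => by rw [h p hp]

theorem prefixCount_mul_swap_add {i j : Fin n} (hij : i ≠ j) (m b : ℕ) :
    prefixCount (w * swap i j) m b +
        ((if (i : ℕ) < m ∧ (w i : ℕ) < b then 1 else 0) +
          if (j : ℕ) < m ∧ (w j : ℕ) < b then 1 else 0) =
      prefixCount w m b +
        ((if (i : ℕ) < m ∧ (w j : ℕ) < b then 1 else 0) +
          if (j : ℕ) < m ∧ (w i : ℕ) < b then 1 else 0) := by
  have split (f : Fin n → ℕ) : ∑ p, f p = ∑ p ∈ univ \ {i, j}, f p + (f i + f j) := by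
    rw [← sum_pair hij, sum_sdiff (subset_univ _)]
  simp only [prefixCount, card_filter]
  rw [split, split, sum_congr rfl fun p hp => ?_]
  · simp only [Perm.mul_apply, swap_apply_left, swap_apply_right]
    ring
  · simp only [mem_sdiff, mem_univ, mem_insert, mem_singleton, true_and, not_or] at hp
    rw [Perm.mul_apply, swap_apply_of_ne_of_ne hp.1 hp.2]

theorem prefixCount_mul_swap_add_of_lt {i j : Fin n} (hij : i < j) (hw : w i < w j) (m b : ℕ) :
    prefixCount (w * swap i j) m b +
        (if (i : ℕ) < m ∧ m ≤ j ∧ (w i : ℕ) < b ∧ b ≤ w j then 1 else 0) =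
      prefixCount w m b := by
  have := prefixCount_mul_swap_add w hij.ne m b
  rw [Fin.lt_def] at hij hw
  split_ifs at this ⊢ <;> omega

theorem length_sortedPrefix {k : ℕ} (hk : k ≤ n) :
    (sortedPrefix n w k).length = k := by
  rw [sortedPrefix, length_sort, card_image_of_injective _ fun p q h => w.injective (by omega)]
  simp [Fin.card_filter_val_lt, hk]

theorem countP_sortedPrefix (k b : ℕ) :
    (sortedPrefix n w k).countP (· ≤ b) = prefixCount w k b := by
  rw [sortedPrefix, ← Multiset.coe_countP, sort_eq, Multiset.countP_eq_card_filter,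
    ← filter_val, card_val, filter_image, card_image_of_injective _ fun p q h => w.injective (by omega),
    filter_filter, prefixCount]
  simp only [Nat.add_one_le_iff]

end prefixCount

theorem lenP_lt_lenP_mul_swap {a : Perm (Fin n)} {i j : Fin n} (hij : i < j) (ha : a i < a j) :
    lenP n a < lenP n (a * swap i j) := by
  set σ := swap i j
  let inv (u : Perm (Fin n)) := univ.filter fun p : Fin n × Fin n => p.1 < p.2 ∧ u p.2 < u p.1
  -- `f` moves an inversion `(p, q)` of `a` to `(σ p, σ q)` when `σ` keeps the pair in order; when it
  -- does not, `{p, q}` meets `{i, j}` and `a i < a j` keeps `(p, q)` itself an inversion of `a * σ`.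
  let f (p : Fin n × Fin n) : Fin n × Fin n := if σ p.1 < σ p.2 then (σ p.1, σ p.2) else p
  have hf : ∀ p : Fin n × Fin n, p.1 < p.2 → f (f p) = p := by
    rintro ⟨p, q⟩ hpq
    by_cases h : σ p < σ q
    · simp only [f, if_pos h, σ, swap_apply_self, if_pos hpq]
    · simp only [f, if_neg h]
  calc lenP n a < #(insert (i, j) (inv a)) := by
        rw [card_insert_of_notMem (by simp [inv, ha.le])]
        exact lt_add_one _
    _ ≤ #(inv (a * σ)) := by
      refine card_le_card_of_injOn f (fun pq hpq => ?_) ?_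
      · obtain ⟨p, q⟩ := pq
        simp only [inv, coe_insert, coe_filter, mem_univ, true_and, Set.mem_insert_iff,
          Prod.mk.injEq, Set.mem_ofPred_eq, f, σ, Perm.mul_apply] at hpq ⊢
        simp only [swap_apply_def] at hpq ⊢
        split_ifs <;> grind
      · refine Set.LeftInvOn.injOn (f₁' := f) fun p hp => hf p ?_
        simp only [inv, coe_insert, coe_filter, mem_univ, true_and, Set.mem_insert_iff,
          Set.mem_ofPred_eq] at hp
        rcases hp with rfl | hp
        exacts [hij, hp.1]

theorem lt_of_lenP_lt_lenP_mul_swap {a : Perm (Fin n)} {i j : Fin n} (hij : i < j)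
    (hlen : lenP n a < lenP n (a * swap i j)) : a i < a j := by
  by_contra! h
  have hb : (a * swap i j) i < (a * swap i j) j := by
    simpa using h.lt_of_ne (a.injective.ne hij.ne')
  have := lenP_lt_lenP_mul_swap hij hb
  rw [mul_swap_mul_self] at this
  exact (hlen.trans this).false

theorem prefixCount_le_of_bruhatLE {w v : Perm (Fin n)} (h : bruhatLE n w v) (m b : ℕ) :
    prefixCount v m b ≤ prefixCount w m b := by
  induction h with
  | refl => exact le_rfl
  | tail _ hstep ih =>
    obtain ⟨⟨i, j, hij, rfl⟩, hlen⟩ := hstep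
    refine le_trans ?_ ih
    rcases hij.lt_or_gt with hij | hij
    · have := prefixCount_mul_swap_add_of_lt _ hij (lt_of_lenP_lt_lenP_mul_swap hij hlen) m b
      omega
    · rw [swap_comm] at hlen ⊢
      have := prefixCount_mul_swap_add_of_lt _ hij (lt_of_lenP_lt_lenP_mul_swap hij hlen) m b
      omega

section descents

variable {w v : Perm (Fin n)} {b : ℕ}
  (hdesc : ∀ p q : Fin n, (p : ℕ) + 1 = q → w q < w p → prefixCount v q b ≤ prefixCount w q b)
include hdesc

theorem prefixCount_succ_le_of_apply_lt (p : Fin n) (hp : (w p : ℕ) < b) :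
    prefixCount v (p + 1) b ≤ prefixCount w (p + 1) b := by
  obtain ⟨m, hm⟩ := p
  induction m with
  | zero =>
    simp only [prefixCount_succ _ hm, prefixCount_zero, if_pos hp]
    split_ifs <;> simp
  | succ m ih =>
    have hdom : prefixCount v (m + 1) b ≤ prefixCount w (m + 1) b := by
      by_cases hd : w ⟨m + 1, hm⟩ < w ⟨m, by omega⟩
      · exact hdesc _ _ rfl hd
      · exact ih (by omega) (lt_of_le_of_lt (not_lt.1 hd) hp)
    rw [prefixCount_succ w hm, prefixCount_succ v hm, if_pos hp]
    split_ifs <;> omega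

theorem prefixCount_le_of_le_apply (p : Fin n) (hp : b ≤ w p) :
    prefixCount v p b ≤ prefixCount w p b := by
  have hnext : prefixCount v (p + 1) b ≤ prefixCount w (p + 1) b := by
    by_cases hpn : (p : ℕ) + 1 < n
    · by_cases hd : w ⟨p + 1, hpn⟩ < w p
      · exact hdesc p _ rfl hd
      · exact prefixCount_le_of_le_apply ⟨p + 1, hpn⟩ (hp.trans (not_lt.1 hd))
    · rw [prefixCount_of_le w (by omega), prefixCount_of_le v (by omega)]
  rw [prefixCount_succ w p.isLt, prefixCount_succ v p.isLt, if_neg (not_lt.2 hp)] at hnext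
  split_ifs at hnext <;> omega
termination_by n - p

theorem prefixCount_le_of_le_at_descents (m : ℕ) : prefixCount v m b ≤ prefixCount w m b := by
  rcases Nat.lt_or_ge m n with hm | hm
  · cases m with
    | zero => simp
    | succ m =>
      by_cases hlast : (w ⟨m, by omega⟩ : ℕ) < b
      · exact prefixCount_succ_le_of_apply_lt hdesc _ hlast
      by_cases hnext : b ≤ (w ⟨m + 1, hm⟩ : ℕ)
      · exact prefixCount_le_of_le_apply hdesc ⟨m + 1, hm⟩ hnext
      · exact hdesc ⟨m, by omega⟩ ⟨m + 1, hm⟩ rfl (Fin.lt_def.2 (by omega))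
  · rw [prefixCount_of_le w hm, prefixCount_of_le v hm]

end descents

section step

variable {w v : Perm (Fin n)} (hdom : ∀ m b, prefixCount v m b ≤ prefixCount w m b)
include hdom

theorem apply_lt_apply_of_prefixCount_le {K : Fin n} (hagree : ∀ p : Fin n, (p : ℕ) < K → w p = v p)
    (hK : w K ≠ v K) : w K < v K := by
  by_contra! h
  have := hdom (K + 1) (v K + 1)
  rw [prefixCount_succ w K.isLt, prefixCount_succ v K.isLt, prefixCount_congr w v hagree] at this
  simp only [Fin.eta, lt_add_one, if_true] at this
  rw [if_neg (by have := h.lt_of_ne hK.symm; rw [Fin.lt_def] at this; omega)] at this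
  omega

theorem prefixCount_lt_of_no_value_between {K : Fin n} (hagree : ∀ p : Fin n, (p : ℕ) < K → w p = v p)
    {m : ℕ} (hKm : (K : ℕ) < m)
    (hgap : ∀ p : Fin n, K < p → (p : ℕ) < m → w p ≤ w K ∨ v K < w p)
    {t : ℕ} (ht : (w K : ℕ) < t) (ht' : t ≤ v K) :
    prefixCount v m t < prefixCount w m t := by
  have hw : #{p : Fin n | (K : ℕ) + 1 ≤ p ∧ (p : ℕ) < m ∧ (w p : ℕ) < t} =
      #{p : Fin n | (K : ℕ) + 1 ≤ p ∧ (p : ℕ) < m ∧ (w p : ℕ) < v K + 1} := by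
    refine congrArg card (filter_congr fun p _ => and_congr_right fun hKp => and_congr_right
      fun hpm => ?_)
    have := hgap p hKp hpm
    simp only [Fin.le_def, Fin.lt_def] at this
    omega
  have hv : #{p : Fin n | (K : ℕ) + 1 ≤ p ∧ (p : ℕ) < m ∧ (v p : ℕ) < t} ≤
      #{p : Fin n | (K : ℕ) + 1 ≤ p ∧ (p : ℕ) < m ∧ (v p : ℕ) < v K + 1} :=
    card_le_card (monotone_filter_right _ fun p _ h => ⟨h.1, h.2.1, by omega⟩)
  have := hdom m (v K + 1)
  rw [← prefixCount_add_card_filter w (k := K + 1) hKm,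
    ← prefixCount_add_card_filter v (k := K + 1) hKm,
    prefixCount_succ w K.isLt, prefixCount_succ v K.isLt] at this ⊢
  simp only [Fin.eta, prefixCount_congr w v hagree] at this ⊢
  split_ifs at this ⊢ <;> omega

theorem exists_swap_prefixCount_le (hne : w ≠ v) :
    ∃ i j : Fin n, i < j ∧ w i < w j ∧
      ∀ m b, prefixCount v m b ≤ prefixCount (w * swap i j) m b := by
  obtain ⟨K, hK, hKmin⟩ := wellFounded_lt.has_min {p | w p ≠ v p}
    (not_forall.1 fun h => hne (Equiv.ext h))
  have hagree : ∀ p : Fin n, (p : ℕ) < K → w p = v p := fun p hp => not_not.1 fun h => hKmin p h hp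
  have hlt := apply_lt_apply_of_prefixCount_le hdom hagree hK
  have hpos : K < w.symm (v K) := by
    refine lt_of_le_of_ne (not_lt.1 fun h => ?_) fun h => ?_
    · have := v.injective ((hagree _ h).symm.trans (w.apply_symm_apply _))
      exact (this ▸ h).false
    · exact hK ((congrArg w h).trans (w.apply_symm_apply _))
  obtain ⟨J, ⟨hKJ, hwKJ, hwJ⟩, hJmin⟩ := wellFounded_lt.has_min
    {p | K < p ∧ w K < w p ∧ w p ≤ v K} ⟨w.symm (v K), hpos, by simpa using hlt, by simp⟩
  refine ⟨K, J, hKJ, hwKJ, fun m b => ?_⟩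
  have hswap := prefixCount_mul_swap_add_of_lt w hKJ hwKJ m b
  split_ifs at hswap with hrect
  · have hgap : ∀ p : Fin n, K < p → (p : ℕ) < m → w p ≤ w K ∨ v K < w p := by
      intro p hKp hpm
      by_contra! h
      exact hJmin p ⟨hKp, h.1, h.2⟩ (Fin.lt_def.2 (by omega))
    have := prefixCount_lt_of_no_value_between hdom hagree hrect.1 hgap hrect.2.2.1
      (hrect.2.2.2.trans hwJ)
    omega
  · exact (hdom m b).trans_eq hswap.symm

end step

theorem lenP_le_mul_self (w : Perm (Fin n)) : lenP n w ≤ n * n :=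
  (card_le_univ _).trans (by simp)

theorem bruhatLE_of_prefixCount_le {w v : Perm (Fin n)}
    (hdom : ∀ m b, prefixCount v m b ≤ prefixCount w m b) : bruhatLE n w v := by
  induction hN : n * n - lenP n w using Nat.strong_induction_on generalizing w with
  | _ N ih =>
    by_cases hne : w = v
    · exact hne ▸ Relation.ReflTransGen.refl
    obtain ⟨i, j, hij, hw, hdom'⟩ := exists_swap_prefixCount_le hdom hne
    have hlen := lenP_lt_lenP_mul_swap hij hw
    exact .head ⟨⟨i, j, hij.ne, rfl⟩, hlen⟩
      (ih _ (by have := lenP_le_mul_self (w * swap i j); omega) hdom' rfl)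

theorem bruhatLE_iff_prefixCount_le {w v : Perm (Fin n)} :
    bruhatLE n w v ↔ ∀ m b, prefixCount v m b ≤ prefixCount w m b :=
  ⟨prefixCount_le_of_bruhatLE, bruhatLE_of_prefixCount_le⟩

theorem sortedPrefix_getD_le_iff (w v : Perm (Fin n)) {k : ℕ} (hk : k ≤ n) :
    (∀ i < k, (sortedPrefix n w k).getD i 0 ≤ (sortedPrefix n v k).getD i 0) ↔
      ∀ b, prefixCount v k b ≤ prefixCount w k b := by
  have hw := length_sortedPrefix w hk
  have hv := length_sortedPrefix v hk
  simp only [← countP_sortedPrefix]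
  rw [← List.Pairwise.forall_getD_le_iff (l := sortedPrefix n w k) (l' := sortedPrefix n v k)
    (pairwise_sort _ _) (pairwise_sort _ _) (hw.trans hv.symm), hw]

end

/-- The tableau criterion for Bruhat order on `S_n`: `w ≤ v` iff for every `k`
in the descent set `D_R(w) = {k : w(k) > w(k+1)}` and every `1 ≤ i ≤ k`, the
`i`-th smallest element of `{w(1), …, w(k)}` is at most the `i`-th smallest
element of `{v(1), …, v(k)}`. -/
theorem stmt11 (n : ℕ) [NeZero n] (w v : Equiv.Perm (Fin n)) :
    bruhatLE n w v ↔
      ∀ k, 1 ≤ k → k ≤ n - 1 →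
        (w ((k : ℕ) : Fin n) : ℕ) < (w ((k - 1 : ℕ) : Fin n) : ℕ) →
        ∀ i, 1 ≤ i → i ≤ k →
          (sortedPrefix n w k).getD (i - 1) 0 ≤ (sortedPrefix n v k).getD (i - 1) 0 := by
  rw [bruhatLE_iff_prefixCount_le]
  constructor
  · intro h k _ hkn _ i hi hik
    exact (sortedPrefix_getD_le_iff w v (by omega)).2 (h k) (i - 1) (by omega)
  · intro h m b
    refine prefixCount_le_of_le_at_descents (fun p q hpq hdesc => ?_) m
    have hq := q.isLt
    have hdesc' : (w ((q : ℕ) : Fin n) : ℕ) < (w (((q : ℕ) - 1 : ℕ) : Fin n) : ℕ) := by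
      rwa [Fin.cast_val_eq_self, ← hpq, Nat.add_sub_cancel, Fin.cast_val_eq_self]
    refine (sortedPrefix_getD_le_iff w v hq.le).1 (fun i hi => ?_) b
    simpa using h q (by omega) (by omega) hdesc' (i + 1) (by omega) (by omega)
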